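/- arXiv:2110.15749 — 5 statements merged into one kernel-verified Lean document; each statement's English description precedes it below -/
import Mathlib

section
/- Let A : X → Y be a surjective linear map between finite-dimensional real inner product spaces and v ∈ Y with A*[v] ≠ 0. Let λ_min > 0 be the smallest eigenvalue of the self-adjoint operator A∘A*. Then the Cauchy step Δ = −(‖A*[v]‖²/‖A∘A*[v]‖²)·A*[v] satisfies ‖Δ‖ ≤ λ_min^{−1/2} ‖v‖. -/
/-!
Write `g = A* v` and `T = A ∘ A*`, so that `‖g‖² = ⟪v, T v⟫` and `‖Δ‖ = ‖g‖³ / ‖T v‖²`.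
Cauchy–Schwarz gives `‖g‖² ≤ ‖v‖ ‖T v‖`. Expanding in an eigenbasis of `T`, every eigenvalue
is at least `λ_min`, so `λ_min ‖v‖² ≤ ⟪v, T v⟫`, hence `λ_min ‖v‖ ≤ ‖T v‖` and
`λ_min ‖g‖² ≤ ‖T v‖²`. Multiplying the two bounds gives `√λ_min ‖g‖³ ≤ ‖v‖ ‖T v‖²`.
Surjectivity of `A` makes `A*`, hence `T`, injective, so `λ_min > 0`.
-/

open scoped RealInnerProductSpace
open Module.End

namespace LinearMap.IsSymmetric

variable {E : Type*} [NormedAddCommGroup E] [InnerProductSpace ℝ E] [FiniteDimensional ℝ E]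
  {T : E →ₗ[ℝ] E} {c : ℝ}

theorem mul_norm_sq_le_inner_self_apply (hT : T.IsSymmetric)
    (hc : ∀ μ, HasEigenvalue T μ → c ≤ μ) (x : E) : c * ‖x‖ ^ 2 ≤ ⟪x, T x⟫ := by
  let b := hT.eigenvectorBasis rfl
  have hb : ∀ i, ⟪b i, T x⟫ = hT.eigenvalues rfl i * ⟪b i, x⟫ := fun i => by
    rw [← hT, hT.apply_eigenvectorBasis, real_inner_smul_left]; rfl
  rw [← real_inner_self_eq_norm_sq, ← b.sum_inner_mul_inner, ← b.sum_inner_mul_inner,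
    Finset.mul_sum]
  refine Finset.sum_le_sum fun i _ => ?_
  rw [hb, real_inner_comm x]
  linear_combination mul_le_mul_of_nonneg_right (hc _ (hT.hasEigenvalue_eigenvalues rfl i))
    (mul_self_nonneg ⟪x, b i⟫)

theorem mul_inner_self_apply_le_norm_sq (hT : T.IsSymmetric) (hc₀ : 0 ≤ c)
    (hc : ∀ μ, HasEigenvalue T μ → c ≤ μ) (x : E) : c * ⟪x, T x⟫ ≤ ‖T x‖ ^ 2 := by
  have hCS : ⟪x, T x⟫ ≤ ‖x‖ * ‖T x‖ := real_inner_le_norm x (T x)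
  have hlow : c * ‖x‖ ^ 2 ≤ ⟪x, T x⟫ := hT.mul_norm_sq_le_inner_self_apply hc x
  rcases (norm_nonneg x).eq_or_lt with hx | hx
  · simp [norm_eq_zero.mp hx.symm]
  have hcx : c * ‖x‖ ≤ ‖T x‖ :=
    le_of_mul_le_mul_left (by linear_combination hlow.trans hCS) hx
  calc c * ⟪x, T x⟫ ≤ c * (‖x‖ * ‖T x‖) := mul_le_mul_of_nonneg_left hCS hc₀
    _ = c * ‖x‖ * ‖T x‖ := (mul_assoc _ _ _).symm
    _ ≤ ‖T x‖ * ‖T x‖ := mul_le_mul_of_nonneg_right hcx (norm_nonneg _)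
    _ = ‖T x‖ ^ 2 := (sq _).symm

end LinearMap.IsSymmetric

namespace ContinuousLinearMap

variable {X Y : Type*} [NormedAddCommGroup X] [InnerProductSpace ℝ X] [FiniteDimensional ℝ X]
  [NormedAddCommGroup Y] [InnerProductSpace ℝ Y] [FiniteDimensional ℝ Y]

theorem pos_of_hasEigenvalue_self_comp_adjoint {A : X →L[ℝ] Y} (hA : Function.Surjective A)
    {μ : ℝ} (hμ : HasEigenvalue (A ∘L adjoint A).toLinearMap μ) : 0 < μ := by
  refine (eigenvalue_nonneg_of_nonneg hμ fun x => ?_).lt_of_ne' ?_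
  · exact (isPositive_self_comp_adjoint A).re_inner_nonneg_right x
  rintro rfl
  obtain ⟨w, hw⟩ := hμ.exists_hasEigenvector
  have hker : (A ∘L adjoint A).ker = ⊥ := by
    rw [ker_self_comp_adjoint, ← orthogonal_range, LinearMap.range_eq_top.mpr hA,
      Submodule.top_orthogonal_eq_bot]
  have hw₀ : w ∈ (A ∘L adjoint A).ker := by
    rw [LinearMap.mem_ker]
    simpa using hw.apply_eq_smul
  rw [hker, Submodule.mem_bot] at hw₀
  exact hw.2 hw₀

end ContinuousLinearMap

theorem sq_div_sq_mul_le_div_sqrt {a n t c : ℝ} (ha : 0 ≤ a) (hn : 0 ≤ n) (ht : 0 ≤ t)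
    (hc : 0 < c) (h₁ : a ^ 2 ≤ n * t) (h₂ : c * a ^ 2 ≤ t ^ 2) : a ^ 2 / t ^ 2 * a ≤ n / √c := by
  rcases ht.eq_or_lt with rfl | ht₀
  · rw [zero_pow two_ne_zero, div_zero, zero_mul]
    positivity
  have hsqrt : √c * a ≤ t := by
    have := Real.sqrt_le_sqrt h₂
    rwa [Real.sqrt_mul hc.le, Real.sqrt_sq ha, Real.sqrt_sq ht] at this
  rw [div_mul_eq_mul_div, div_le_div_iff₀ (by positivity) (Real.sqrt_pos.2 hc)]
  calc a ^ 2 * a * √c = a ^ 2 * (√c * a) := by ring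
    _ ≤ n * t * t := mul_le_mul h₁ hsqrt (by positivity) (by positivity)
    _ = n * t ^ 2 := by ring

theorem stmt_8_general {X Y : Type*}
    [NormedAddCommGroup X] [InnerProductSpace ℝ X] [FiniteDimensional ℝ X]
    [NormedAddCommGroup Y] [InnerProductSpace ℝ Y] [FiniteDimensional ℝ Y]
    (A : X →L[ℝ] Y) (hA : Function.Surjective A)
    (v : Y) (lamMin : ℝ)
    (hlam : IsLeast {μ : ℝ |
        Module.End.HasEigenvalue ((A ∘L ContinuousLinearMap.adjoint A).toLinearMap) μ} lamMin) :
    let g := ContinuousLinearMap.adjoint A v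
    ‖-(‖g‖ ^ 2 / ‖A g‖ ^ 2) • g‖ ≤ lamMin ^ (-(1 / 2 : ℝ)) * ‖v‖ := by
  intro g
  set T := A ∘L ContinuousLinearMap.adjoint A
  have hT : T.toLinearMap.IsSymmetric :=
    (ContinuousLinearMap.isPositive_self_comp_adjoint A).isSymmetric
  have hlam₀ : 0 < lamMin := ContinuousLinearMap.pos_of_hasEigenvalue_self_comp_adjoint hA hlam.1
  have hg : ‖g‖ ^ 2 = ⟪v, T v⟫ := by
    rw [ContinuousLinearMap.apply_norm_sq_eq_inner_adjoint_right,
      ContinuousLinearMap.adjoint_adjoint]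
    rfl
  have h₁ : ‖g‖ ^ 2 ≤ ‖v‖ * ‖A g‖ := hg ▸ real_inner_le_norm v (T v)
  have h₂ : lamMin * ‖g‖ ^ 2 ≤ ‖A g‖ ^ 2 :=
    hg ▸ hT.mul_inner_self_apply_le_norm_sq hlam₀.le (fun μ hμ => hlam.2 hμ) v
  rw [norm_smul, norm_neg, Real.norm_of_nonneg (by positivity), Real.rpow_neg hlam₀.le,
    ← Real.sqrt_eq_rpow, ← div_eq_inv_mul]
  exact sq_div_sq_mul_le_div_sqrt (norm_nonneg _) (norm_nonneg _) (norm_nonneg _) hlam₀ h₁ h₂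

theorem stmt_8 {X Y : Type*}
    [NormedAddCommGroup X] [InnerProductSpace ℝ X] [FiniteDimensional ℝ X]
    [NormedAddCommGroup Y] [InnerProductSpace ℝ Y] [FiniteDimensional ℝ Y]
    (A : X →L[ℝ] Y) (hA : Function.Surjective A)
    (v : Y) (hv : ContinuousLinearMap.adjoint A v ≠ 0) (lamMin : ℝ)
    (hlam : IsLeast {μ : ℝ |
        Module.End.HasEigenvalue ((A ∘L ContinuousLinearMap.adjoint A).toLinearMap) μ} lamMin) :
    let g := ContinuousLinearMap.adjoint A v
    ‖-(‖g‖ ^ 2 / ‖A g‖ ^ 2) • g‖ ≤ lamMin ^ (-(1 / 2 : ℝ)) * ‖v‖ :=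
  stmt_8_general A hA v lamMin hlam
end

section
/- Let A : X → Y be a linear map between finite-dimensional real inner product spaces, v ∈ Y with A*[v] ≠ 0, and Δ the Cauchy step Δ = −(‖A*[v]‖²/‖A∘A*[v]‖²)A*[v]. Then ‖v + A[Δ]‖ ≤ ‖v‖·√(1 − ‖A*[v]‖²/(‖v‖²·‖A‖²_op)), where ‖A‖_op is the operator norm of A. -/
/-!
Write `g = A*[v]`. Since `⟪v, A g⟫ = ‖g‖²`, the Cauchy step is the exact line search along `-g`,
and Pythagoras gives the residual identity `‖v + A Δ‖² = ‖v‖² - ‖g‖⁴ / ‖A g‖²`. The bound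
`‖A g‖ ≤ ‖A‖ ‖g‖` then turns the decrease `‖g‖⁴ / ‖A g‖²` into at least `‖g‖² / ‖A‖²`.
-/

open ContinuousLinearMap

theorem norm_sub_inner_div_smul_sq {F : Type*} [NormedAddCommGroup F] [InnerProductSpace ℝ F]
    (v w : F) :
    ‖v - (inner ℝ v w / ‖w‖ ^ 2) • w‖ ^ 2 = ‖v‖ ^ 2 - inner ℝ v w ^ 2 / ‖w‖ ^ 2 := by
  rcases eq_or_ne w 0 with rfl | hw
  · simp
  have hw : ‖w‖ ≠ 0 := norm_ne_zero_iff.mpr hw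
  rw [norm_sub_sq_real, real_inner_smul_right, norm_smul, mul_pow, Real.norm_eq_abs, sq_abs]
  field_simp
  ring

section Adjoint

variable {X Y : Type*} [NormedAddCommGroup X] [InnerProductSpace ℝ X] [CompleteSpace X]
  [NormedAddCommGroup Y] [InnerProductSpace ℝ Y] [CompleteSpace Y]

theorem inner_apply_adjoint_self (A : X →L[ℝ] Y) (v : Y) :
    inner ℝ v (A (adjoint A v)) = ‖adjoint A v‖ ^ 2 := by
  rw [← adjoint_inner_left, real_inner_self_eq_norm_sq]

theorem apply_adjoint_self_ne_zero {A : X →L[ℝ] Y} {v : Y} (h : adjoint A v ≠ 0) :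
    A (adjoint A v) ≠ 0 := by
  intro hA
  have := inner_apply_adjoint_self A v
  rw [hA, inner_zero_right] at this
  exact h (norm_eq_zero.mp (pow_eq_zero_iff two_ne_zero |>.mp this.symm))

theorem norm_add_cauchyStep_sq (A : X →L[ℝ] Y) (v : Y) :
    ‖v + A (-(‖adjoint A v‖ ^ 2 / ‖A (adjoint A v)‖ ^ 2) • adjoint A v)‖ ^ 2 =
      ‖v‖ ^ 2 - ‖adjoint A v‖ ^ 4 / ‖A (adjoint A v)‖ ^ 2 := by
  have := norm_sub_inner_div_smul_sq v (A (adjoint A v))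
  rw [inner_apply_adjoint_self, ← pow_mul] at this
  rwa [map_smul, neg_smul, ← sub_eq_add_neg]

end Adjoint

theorem sq_div_opNorm_sq_le {E F : Type*} [NormedAddCommGroup E] [NormedSpace ℝ E]
    [NormedAddCommGroup F] [NormedSpace ℝ F] {A : E →L[ℝ] F} {x : E} (hx : A x ≠ 0) :
    ‖x‖ ^ 2 / ‖A‖ ^ 2 ≤ ‖x‖ ^ 4 / ‖A x‖ ^ 2 := by
  have hAx : 0 < ‖A x‖ := norm_pos_iff.mpr hx
  have hA : 0 < ‖A‖ := norm_pos_iff.mpr fun h ↦ hx (by simp [h])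
  have hle : ‖A x‖ ^ 2 ≤ ‖A‖ ^ 2 * ‖x‖ ^ 2 := by
    rw [← mul_pow]
    exact pow_le_pow_left₀ (norm_nonneg _) (A.le_opNorm x) 2
  rw [div_le_div_iff₀ (by positivity) (by positivity)]
  nlinarith [sq_nonneg ‖x‖]

theorem stmt_9_general {X Y : Type*}
    [NormedAddCommGroup X] [InnerProductSpace ℝ X] [FiniteDimensional ℝ X]
    [NormedAddCommGroup Y] [InnerProductSpace ℝ Y] [FiniteDimensional ℝ Y]
    (A : X →L[ℝ] Y) (v : Y) :
    let g := ContinuousLinearMap.adjoint A v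
    let Δ := -(‖g‖ ^ 2 / ‖A g‖ ^ 2) • g
    ‖v + A Δ‖ ≤ ‖v‖ * Real.sqrt (1 - ‖g‖ ^ 2 / (‖v‖ ^ 2 * ‖A‖ ^ 2)) := by
  intro g Δ
  rcases eq_or_ne g 0 with hg | hg
  · simp [Δ, hg]
  have hv0 : v ≠ 0 := fun h ↦ hg (by simp [g, h])
  have hdecrease := sq_div_opNorm_sq_le (apply_adjoint_self_ne_zero hg)
  have hv2 : ‖v‖ ^ 2 ≠ 0 := pow_ne_zero 2 (norm_ne_zero_iff.mpr hv0)
  have hsq : ‖v + A Δ‖ ^ 2 ≤ ‖v‖ ^ 2 * (1 - ‖g‖ ^ 2 / (‖v‖ ^ 2 * ‖A‖ ^ 2)) := by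
    rw [norm_add_cauchyStep_sq, mul_sub, mul_one, ← mul_div_assoc, mul_div_mul_left _ _ hv2]
    linarith
  calc ‖v + A Δ‖ ≤ √(‖v‖ ^ 2 * (1 - ‖g‖ ^ 2 / (‖v‖ ^ 2 * ‖A‖ ^ 2))) := Real.le_sqrt_of_sq_le hsq
    _ = ‖v‖ * √(1 - ‖g‖ ^ 2 / (‖v‖ ^ 2 * ‖A‖ ^ 2)) := by
      rw [Real.sqrt_mul (sq_nonneg _), Real.sqrt_sq (norm_nonneg _)]

theorem stmt_9 {X Y : Type*}
    [NormedAddCommGroup X] [InnerProductSpace ℝ X] [FiniteDimensional ℝ X]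
    [NormedAddCommGroup Y] [InnerProductSpace ℝ Y] [FiniteDimensional ℝ Y]
    (A : X →L[ℝ] Y) (v : Y) (hv : ContinuousLinearMap.adjoint A v ≠ 0) :
    let g := ContinuousLinearMap.adjoint A v
    let Δ := -(‖g‖ ^ 2 / ‖A g‖ ^ 2) • g
    ‖v + A Δ‖ ≤ ‖v‖ * Real.sqrt (1 - ‖g‖ ^ 2 / (‖v‖ ^ 2 * ‖A‖ ^ 2)) :=
  stmt_9_general A v
end

section
/- Let A : X → Y be a linear map between finite-dimensional real inner product spaces with Moore–Penrose pseudoinverse A† : Y → X. If z ∈ Y satisfies ‖(A∘A* + σ id)[z] + v‖ ≤ η‖v‖ with σ, η ≥ 0, then ‖A*[z]‖ ≤ (1+η)·‖A†‖_op·‖v‖. -/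
open ContinuousLinearMap

/-- `B` is the Moore–Penrose pseudoinverse of `A` (the four Penrose conditions, with
self-adjointness expressing that `A ∘ B` and `B ∘ A` are orthogonal projections). -/
def IsPseudoinverse {X Y : Type*}
    [NormedAddCommGroup X] [InnerProductSpace ℝ X] [FiniteDimensional ℝ X]
    [NormedAddCommGroup Y] [InnerProductSpace ℝ Y] [FiniteDimensional ℝ Y]
    (A : X →L[ℝ] Y) (B : Y →L[ℝ] X) : Prop :=
  A ∘L B ∘L A = A ∧ B ∘L A ∘L B = B ∧
    IsSelfAdjoint (A ∘L B) ∧ IsSelfAdjoint (B ∘L A)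

/-!
With `x = A* z`, the Penrose identities give `B A x = x` and `B* x = A B z`, so
`‖x‖² = ⟪B* x, A x⟫ = ⟪A B z, A x + σ z⟫ - σ ⟪A B z, z⟫`. The last inner product is
nonnegative because `A B` is an orthogonal projection, hence
`‖x‖² ≤ ‖B* x‖ ‖A x + σ z‖ ≤ ‖B‖ ‖x‖ ‖A x + σ z‖`. This is the bound
`‖A* (A A* + σ)⁻¹‖ ≤ ‖A†‖` without inverting `A A* + σ`; the theorem follows since
`A x + σ z` lies within `η ‖v‖` of `-v`.
-/

namespace IsPseudoinverse

variable {X Y : Type*}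
    [NormedAddCommGroup X] [InnerProductSpace ℝ X] [FiniteDimensional ℝ X]
    [NormedAddCommGroup Y] [InnerProductSpace ℝ Y] [FiniteDimensional ℝ Y]
    {A : X →L[ℝ] Y} {B : Y →L[ℝ] X}

theorem comp_comp_adjoint (hB : IsPseudoinverse A B) : B ∘L A ∘L adjoint A = adjoint A := by
  obtain ⟨hABA, -, -, hBA⟩ := hB
  calc B ∘L A ∘L adjoint A = adjoint (B ∘L A) ∘L adjoint A := by rw [hBA.adjoint_eq]; rfl
    _ = adjoint (A ∘L B ∘L A) := (adjoint_comp _ _).symm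
    _ = adjoint A := by rw [hABA]

theorem apply_apply_adjoint (hB : IsPseudoinverse A B) (z : Y) :
    B (A (adjoint A z)) = adjoint A z :=
  congr($(hB.comp_comp_adjoint) z)

theorem adjoint_apply_adjoint (hB : IsPseudoinverse A B) (z : Y) :
    adjoint B (adjoint A z) = A (B z) := by
  rw [← comp_apply, ← adjoint_comp, hB.2.2.1.adjoint_eq, comp_apply]

theorem isPositive_comp (hB : IsPseudoinverse A B) : (A ∘L B).IsPositive := by
  refine (IsIdempotentElem.isPositive_iff_isSelfAdjoint ?_).2 hB.2.2.1
  change (A ∘L B) ∘L (A ∘L B) = A ∘L B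
  rw [← comp_assoc, comp_assoc A B A, hB.1]

theorem norm_adjoint_apply_le (hB : IsPseudoinverse A B) {σ : ℝ} (hσ : 0 ≤ σ) (z : Y) :
    ‖adjoint A z‖ ≤ ‖B‖ * ‖A (adjoint A z) + σ • z‖ := by
  set x := adjoint A z
  set y := A x + σ • z
  have hsq : ‖x‖ ^ 2 ≤ ‖adjoint B x‖ * ‖y‖ :=
    calc ‖x‖ ^ 2 = inner ℝ (adjoint B x) (A x) := by
          rw [adjoint_inner_left, hB.apply_apply_adjoint, real_inner_self_eq_norm_sq]
      _ = inner ℝ (A (B z)) y - σ * inner ℝ (A (B z)) z := by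
          rw [hB.adjoint_apply_adjoint, inner_add_right, real_inner_smul_right]; ring
      _ ≤ inner ℝ (A (B z)) y :=
          sub_le_self _ (mul_nonneg hσ (hB.isPositive_comp.inner_nonneg_left z))
      _ ≤ ‖A (B z)‖ * ‖y‖ := real_inner_le_norm _ _
      _ = ‖adjoint B x‖ * ‖y‖ := by rw [hB.adjoint_apply_adjoint]
  have hBx : ‖adjoint B x‖ ≤ ‖B‖ * ‖x‖ := by
    simpa only [adjoint.norm_map] using (adjoint B).le_opNorm x
  nlinarith [norm_nonneg x, mul_nonneg (norm_nonneg B) (norm_nonneg y),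
    mul_le_mul_of_nonneg_right hBx (norm_nonneg y)]

end IsPseudoinverse

theorem stmt_13_general {X Y : Type*}
    [NormedAddCommGroup X] [InnerProductSpace ℝ X] [FiniteDimensional ℝ X]
    [NormedAddCommGroup Y] [InnerProductSpace ℝ Y] [FiniteDimensional ℝ Y]
    (A : X →L[ℝ] Y) (B : Y →L[ℝ] X) (hB : IsPseudoinverse A B)
    (σ η : ℝ) (hσ : 0 ≤ σ) (v z : Y)
    (h : ‖A (ContinuousLinearMap.adjoint A z) + σ • z + v‖ ≤ η * ‖v‖) :
    ‖ContinuousLinearMap.adjoint A z‖ ≤ (1 + η) * ‖B‖ * ‖v‖ := by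
  have hres : ‖A (adjoint A z) + σ • z‖ ≤ (1 + η) * ‖v‖ :=
    calc ‖A (adjoint A z) + σ • z‖ = ‖(A (adjoint A z) + σ • z + v) - v‖ := by
          rw [add_sub_cancel_right]
      _ ≤ η * ‖v‖ + ‖v‖ := (norm_sub_le _ _).trans (by gcongr)
      _ = (1 + η) * ‖v‖ := by ring
  calc ‖adjoint A z‖ ≤ ‖B‖ * ‖A (adjoint A z) + σ • z‖ := hB.norm_adjoint_apply_le hσ z
    _ ≤ ‖B‖ * ((1 + η) * ‖v‖) := by gcongr
    _ = (1 + η) * ‖B‖ * ‖v‖ := by ring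

theorem stmt_13 {X Y : Type*}
    [NormedAddCommGroup X] [InnerProductSpace ℝ X] [FiniteDimensional ℝ X]
    [NormedAddCommGroup Y] [InnerProductSpace ℝ Y] [FiniteDimensional ℝ Y]
    (A : X →L[ℝ] Y) (B : Y →L[ℝ] X) (hB : IsPseudoinverse A B)
    (σ η : ℝ) (hσ : 0 ≤ σ) (hη : 0 ≤ η) (v z : Y)
    (h : ‖A (ContinuousLinearMap.adjoint A z) + σ • z + v‖ ≤ η * ‖v‖) :
    ‖ContinuousLinearMap.adjoint A z‖ ≤ (1 + η) * ‖B‖ * ‖v‖ :=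
  stmt_13_general A B hB σ η hσ v z h
end

section
/- With Φ(S,Q) = S ⊙ S − QΛQᵀ and the Frobenius inner product ⟨A,B⟩ = tr(AᵀB), the adjoint of DΦ(S,Q) applied to a symmetric matrix ΔZ is (2 S ⊙ ΔZ, [QΛQᵀ, ΔZ]·Q); i.e., for all tangent vectors (ΔS, QΩ) with ΔS symmetric and Ω skew, ⟨DΦ(S,Q)[(ΔS,QΩ)], ΔZ⟩ = ⟨ΔS, 2S⊙ΔZ⟩ + ⟨QΩ, [QΛQᵀ,ΔZ]Q⟩. -/
/-! Both components are adjoint computations for the trace pairing `⟨U, V⟩ = tr (Uᵀ V)`: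
entrywise multiplication by `S` is self-adjoint, and for symmetric `A = Q Λ Qᵀ` one has
`⟨[A, M], Z⟩ = ⟨M, [A, Z]⟩`. With `M = Q Ω Qᵀ`, cyclicity of the trace moves the outer `Q`
to the right of `[A, Z]`. -/

open Matrix

namespace Matrix

variable {m n α : Type*}

theorem IsSymm.mul_mul_transpose [Fintype n] [CommSemiring α] {B : Matrix n n α}
    (hB : B.IsSymm) (Q : Matrix m n α) : (Q * B * Qᵀ).IsSymm := by
  simp only [IsSymm, transpose_mul, transpose_transpose, hB.eq, Matrix.mul_assoc]

theorem trace_transpose_hadamard_mul [Fintype m] [Fintype n] [CommSemiring α]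
    (X Y Z : Matrix m n α) :
    trace ((X ⊙ Y)ᵀ * Z) = trace (Yᵀ * (X ⊙ Z)) := by
  rw [trace_mul_comm, ← sum_hadamard_eq, trace_mul_comm, ← sum_hadamard_eq]
  simp only [hadamard_apply]
  exact Finset.sum_congr rfl fun i _ => Finset.sum_congr rfl fun j _ => by ring

theorem trace_transpose_commutator_mul [Fintype n] [CommRing α] {A : Matrix n n α}
    (hA : A.IsSymm) (M Z : Matrix n n α) :
    trace ((A * M - M * A)ᵀ * Z) = trace (Mᵀ * (A * Z - Z * A)) := by
  simp only [transpose_sub, transpose_mul, hA.eq, Matrix.sub_mul, Matrix.mul_sub, trace_sub]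
  rw [trace_mul_cycle' Mᵀ Z A, Matrix.mul_assoc, Matrix.mul_assoc]

end Matrix

theorem stmt_16_general (n : ℕ) (Lam : Fin n → ℝ)
    (S Q : Matrix (Fin n) (Fin n) ℝ)
    (ΔS Ω ΔZ : Matrix (Fin n) (Fin n) ℝ) :
    let A := Q * Matrix.diagonal Lam * Qᵀ
    Matrix.trace (((2 : ℝ) • S.hadamard ΔS
        + (A * ((Q * Ω) * Qᵀ) - ((Q * Ω) * Qᵀ) * A))ᵀ * ΔZ)
      = Matrix.trace (ΔSᵀ * ((2 : ℝ) • S.hadamard ΔZ))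
        + Matrix.trace ((Q * Ω)ᵀ * ((A * ΔZ - ΔZ * A) * Q)) := by
  intro A
  have hA : A.IsSymm := (isSymm_diagonal Lam).mul_mul_transpose Q
  rw [transpose_add, Matrix.add_mul, trace_add, transpose_smul, Matrix.smul_mul, trace_smul,
    trace_transpose_hadamard_mul, ← trace_smul, ← Matrix.mul_smul,
    trace_transpose_commutator_mul hA, transpose_mul _ Qᵀ, transpose_transpose,
    trace_mul_cycle', Matrix.mul_assoc]

theorem stmt_16 (n : ℕ) (Lam : Fin n → ℝ)
    (S Q : Matrix (Fin n) (Fin n) ℝ) (hS : S.IsSymm) (hQ : Qᵀ * Q = 1)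
    (ΔS Ω ΔZ : Matrix (Fin n) (Fin n) ℝ) (hΔS : ΔS.IsSymm) (hΩ : Ωᵀ = -Ω) (hΔZ : ΔZ.IsSymm) :
    let A := Q * Matrix.diagonal Lam * Qᵀ
    Matrix.trace (((2 : ℝ) • S.hadamard ΔS
        + (A * ((Q * Ω) * Qᵀ) - ((Q * Ω) * Qᵀ) * A))ᵀ * ΔZ)
      = Matrix.trace (ΔSᵀ * ((2 : ℝ) • S.hadamard ΔZ))
        + Matrix.trace ((Q * Ω)ᵀ * ((A * ΔZ - ΔZ * A) * Q)) :=
  stmt_16_general n Lam S Q ΔS Ω ΔZ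
end

section
/- Let (S̄, Q̄) ∈ Sym(n) × O(n) with Φ(S̄,Q̄) = S̄⊙S̄ − Q̄ΛQ̄ᵀ. Then DΦ(S̄,Q̄) is surjective if and only if the only symmetric matrix ΔZ satisfying both S̄ ⊙ ΔZ = 0 and Q̄ΛQ̄ᵀ ΔZ − ΔZ Q̄ΛQ̄ᵀ = 0 is ΔZ = 0. In particular, if every entry of S̄ is nonzero, then DΦ(S̄,Q̄) is surjective. -/
/-! With the Frobenius inner product `⟪X, Y⟫ = tr (X Yᵀ)` the range of `DΦ(S, Q)` lies in
`Sym(n)`, so it is all of `Sym(n)` iff no nonzero symmetric `Z` is orthogonal to it. Since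
`⟪2 S ⊙ ΔS + [A, QΩQᵀ], Z⟫ = 2 ⟪ΔS, S ⊙ Z⟫ + ⟪QΩQᵀ, [A, Z]⟫` and `QΩQᵀ` runs over all skew
matrices, among them `[A, Z]`, orthogonality of `Z` means `S ⊙ Z = 0` and `[A, Z] = 0`. -/

open Matrix

theorem Submodule.le_iff_inf_orthogonal_eq_bot {𝕜 E : Type*} [RCLike 𝕜] [NormedAddCommGroup E]
    [InnerProductSpace 𝕜 E] {K V : Submodule 𝕜 E} [K.HasOrthogonalProjection] (hKV : K ≤ V) :
    V ≤ K ↔ V ⊓ Kᗮ = ⊥ := by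
  refine ⟨fun hVK => eq_bot_iff.2 ((inf_le_inf_right _ hVK).trans K.inf_orthogonal_eq_bot.le),
    fun h => ?_⟩
  have hV := Submodule.sup_orthogonal_inf_of_hasOrthogonalProjection hKV
  rw [inf_comm, h, sup_bot_eq] at hV
  exact hV.ge

namespace Matrix

section Frobenius

variable {m n : Type*}

def toEuclidean : Matrix m n ℝ ≃ₗ[ℝ] EuclideanSpace ℝ (m × n) :=
  (LinearEquiv.curry ℝ ℝ m n).symm.trans (WithLp.linearEquiv 2 ℝ (m × n → ℝ)).symm

@[simp]
theorem toEuclidean_apply (M : Matrix m n ℝ) (p : m × n) : toEuclidean M p = M p.1 p.2 := rfl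

variable [Fintype m] [Fintype n]

theorem inner_toEuclidean (M N : Matrix m n ℝ) :
    inner ℝ (toEuclidean M) (toEuclidean N) = trace (M * Nᵀ) := by
  rw [← sum_hadamard_eq]
  simp [PiLp.inner_apply, Fintype.sum_prod_type, hadamard_apply, mul_comm]

theorem trace_mul_transpose_self_eq_zero_iff {M : Matrix m n ℝ} :
    trace (M * Mᵀ) = 0 ↔ M = 0 := by
  simpa using trace_mul_conjTranspose_self_eq_zero_iff (A := M)

theorem le_iff_forall_trace_mul_transpose_eq_zero {K V : Submodule ℝ (Matrix m n ℝ)}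
    (hKV : K ≤ V) : V ≤ K ↔ ∀ Z ∈ V, (∀ X ∈ K, trace (X * Zᵀ) = 0) → Z = 0 := by
  rw [← Submodule.map_le_map_iff_of_injective toEuclidean.injective,
    Submodule.le_iff_inf_orthogonal_eq_bot (Submodule.map_mono hKV), Submodule.eq_bot_iff]
  simp [Submodule.mem_orthogonal, toEuclidean.surjective.forall, inner_toEuclidean]

theorem trace_hadamard_mul_transpose (S X Y : Matrix m n ℝ) :
    trace ((S ⊙ X) * Yᵀ) = trace (X * (S ⊙ Y)ᵀ) := by
  rw [← sum_hadamard_eq, ← sum_hadamard_eq, hadamard_comm S X, hadamard_assoc]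

theorem trace_commutator_mul_transpose (A W Y : Matrix n n ℝ) :
    trace ((A * W - W * A) * Yᵀ) = trace (W * (Aᵀ * Y - Y * Aᵀ)ᵀ) := by
  rw [transpose_sub, transpose_mul, transpose_mul, transpose_transpose, Matrix.sub_mul,
    Matrix.mul_sub, trace_sub, trace_sub, Matrix.mul_assoc, trace_mul_comm A]
  simp only [Matrix.mul_assoc]

end Frobenius

section Symmetric

variable {α n : Type*}

theorem eq_zero_of_hadamard_eq_zero [MulZeroClass α] [NoZeroDivisors α] {S Z : Matrix n n α}
    (hS : ∀ i j, S i j ≠ 0) (hSZ : S ⊙ Z = 0) : Z = 0 := by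
  ext i j
  exact (mul_eq_zero.mp (congr_fun₂ hSZ i j)).resolve_left (hS i j)

theorem IsSymm.hadamard [CommMagma α] {A B : Matrix n n α} (hA : A.IsSymm) (hB : B.IsSymm) :
    (A ⊙ B).IsSymm := by
  rw [IsSymm, transpose_hadamard, hA.eq, hB.eq]

theorem mem_selfAdjoint_submodule_iff {M : Matrix n n ℝ} :
    M ∈ selfAdjoint.submodule ℝ (Matrix n n ℝ) ↔ M.IsSymm := by
  show star M = M ↔ Mᵀ = M
  rw [star_eq_conjTranspose, conjTranspose_eq_transpose_of_trivial]

theorem mem_skewAdjoint_submodule_iff {M : Matrix n n ℝ} :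
    M ∈ skewAdjoint.submodule ℝ (Matrix n n ℝ) ↔ Mᵀ = -M := by
  show star M = -M ↔ Mᵀ = -M
  rw [star_eq_conjTranspose, conjTranspose_eq_transpose_of_trivial]

variable [Fintype n] [CommRing α]

theorem transpose_mul_mul_transpose (Q W : Matrix n n α) :
    (Q * W * Qᵀ)ᵀ = Q * Wᵀ * Qᵀ := by
  rw [transpose_mul, transpose_mul, transpose_transpose, Matrix.mul_assoc]

theorem IsSymm.mul_mul_transpose_s19 {D : Matrix n n α} (hD : D.IsSymm) (Q : Matrix n n α) :
    (Q * D * Qᵀ).IsSymm := by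
  rw [IsSymm, transpose_mul_mul_transpose, hD.eq]

theorem transpose_mul_mul_transpose_eq_neg {W : Matrix n n α} (hW : Wᵀ = -W) (Q : Matrix n n α) :
    (Q * W * Qᵀ)ᵀ = -(Q * W * Qᵀ) := by
  rw [transpose_mul_mul_transpose, hW, Matrix.mul_neg, Matrix.neg_mul]

theorem transpose_commutator_eq_neg {A B : Matrix n n α} (hA : A.IsSymm) (hB : B.IsSymm) :
    (A * B - B * A)ᵀ = -(A * B - B * A) := by
  rw [transpose_sub, transpose_mul, transpose_mul, hA.eq, hB.eq, neg_sub]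

theorem IsSymm.commutator_of_transpose_eq_neg {A W : Matrix n n α} (hA : A.IsSymm)
    (hW : Wᵀ = -W) : (A * W - W * A).IsSymm := by
  rw [IsSymm, transpose_sub, transpose_mul, transpose_mul, hA.eq, hW, Matrix.mul_neg,
    Matrix.neg_mul, sub_neg_eq_add, neg_add_eq_sub]

end Symmetric

variable {n : Type*} [Fintype n]

/-- `DΦ(S, Q)` at the tangent vector `(ΔS, QΩ)`, written with `A = QΛQᵀ`. -/
def diffPhi (S Q A : Matrix n n ℝ) : Matrix n n ℝ × Matrix n n ℝ →ₗ[ℝ] Matrix n n ℝ where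
  toFun p := (2 : ℝ) • S ⊙ p.1 + (A * (Q * p.2 * Qᵀ) - Q * p.2 * Qᵀ * A)
  map_add' p q := by
    simp only [Prod.fst_add, Prod.snd_add, hadamard_add, Matrix.mul_add, Matrix.add_mul]
    module
  map_smul' c p := by
    simp only [Prod.smul_fst, Prod.smul_snd, hadamard_smul, Matrix.mul_smul, Matrix.smul_mul,
      RingHom.id_apply]
    module

theorem trace_diffPhi_mul_transpose (S Q A ΔS Ω Z : Matrix n n ℝ) :
    trace (diffPhi S Q A (ΔS, Ω) * Zᵀ)
      = 2 * trace (ΔS * (S ⊙ Z)ᵀ) + trace (Q * Ω * Qᵀ * (Aᵀ * Z - Z * Aᵀ)ᵀ) := by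
  simp only [diffPhi, LinearMap.coe_mk, AddHom.coe_mk, Matrix.add_mul, trace_add, smul_mul,
    trace_smul, smul_eq_mul, trace_hadamard_mul_transpose, trace_commutator_mul_transpose]

theorem diffPhi_isSymm {S Q A ΔS Ω : Matrix n n ℝ} (hS : S.IsSymm) (hA : A.IsSymm)
    (hΔS : ΔS.IsSymm) (hΩ : Ωᵀ = -Ω) : (diffPhi S Q A (ΔS, Ω)).IsSymm :=
  ((hS.hadamard hΔS).smul 2).add
    (hA.commutator_of_transpose_eq_neg (transpose_mul_mul_transpose_eq_neg hΩ Q))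

theorem forall_trace_diffPhi_mul_transpose_eq_zero_iff [DecidableEq n] {S Q A Z : Matrix n n ℝ}
    (hS : S.IsSymm) (hA : A.IsSymm) (hQ : Q * Qᵀ = 1) (hZ : Z.IsSymm) :
    (∀ ΔS Ω, ΔS.IsSymm → Ωᵀ = -Ω → trace (diffPhi S Q A (ΔS, Ω) * Zᵀ) = 0) ↔
      S ⊙ Z = 0 ∧ A * Z - Z * A = 0 := by
  simp only [trace_diffPhi_mul_transpose, hA.eq]
  refine ⟨fun h => ⟨?_, ?_⟩, fun ⟨hSZ, hAZ⟩ ΔS Ω _ _ => by simp [hSZ, hAZ]⟩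
  · have hSZ := h (S ⊙ Z) 0 (hS.hadamard hZ) (by simp)
    simpa [trace_mul_transpose_self_eq_zero_iff] using hSZ
  · have hQCQ : Q * (Qᵀ * (A * Z - Z * A) * Q) * Qᵀ = A * Z - Z * A := by
      simp only [← Matrix.mul_assoc, hQ, Matrix.one_mul]
      rw [Matrix.mul_assoc, hQ, Matrix.mul_one]
    have hskew := transpose_mul_mul_transpose_eq_neg (transpose_commutator_eq_neg hA hZ) Qᵀ
    rw [transpose_transpose] at hskew
    have hAZ := h 0 _ isSymm_zero hskew
    rw [hQCQ] at hAZ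
    simpa only [Matrix.zero_mul, trace_zero, mul_zero, zero_add,
      trace_mul_transpose_self_eq_zero_iff] using hAZ

theorem forall_isSymm_exists_diffPhi_eq_iff [DecidableEq n] {S Q A : Matrix n n ℝ}
    (hS : S.IsSymm) (hA : A.IsSymm) (hQ : Q * Qᵀ = 1) :
    (∀ Z : Matrix n n ℝ, Z.IsSymm →
        ∃ ΔS Ω : Matrix n n ℝ, ΔS.IsSymm ∧ Ωᵀ = -Ω ∧ diffPhi S Q A (ΔS, Ω) = Z) ↔
      ∀ Z : Matrix n n ℝ, Z.IsSymm → S ⊙ Z = 0 → A * Z - Z * A = 0 → Z = 0 := by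
  set R := ((selfAdjoint.submodule ℝ _).prod (skewAdjoint.submodule ℝ _)).map (diffPhi S Q A)
  have hR : R ≤ selfAdjoint.submodule ℝ (Matrix n n ℝ) := by
    rintro _ ⟨⟨ΔS, Ω⟩, ⟨hΔS, hΩ⟩, rfl⟩
    exact mem_selfAdjoint_submodule_iff.2 (diffPhi_isSymm hS hA
      (mem_selfAdjoint_submodule_iff.1 hΔS) (mem_skewAdjoint_submodule_iff.1 hΩ))
  have hsurj : selfAdjoint.submodule ℝ _ ≤ R ↔
      ∀ Z : Matrix n n ℝ, Z.IsSymm →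
        ∃ ΔS Ω : Matrix n n ℝ, ΔS.IsSymm ∧ Ωᵀ = -Ω ∧ diffPhi S Q A (ΔS, Ω) = Z := by
    simp only [SetLike.le_def, R, Submodule.mem_map, Submodule.mem_prod, Prod.exists, and_assoc,
      mem_selfAdjoint_submodule_iff, mem_skewAdjoint_submodule_iff]
  rw [← hsurj, le_iff_forall_trace_mul_transpose_eq_zero hR]
  refine forall₂_congr fun Z hZ => ?_
  rw [mem_selfAdjoint_submodule_iff] at hZ
  simp only [R, ← SetLike.mem_coe, Submodule.map_coe, Set.forall_mem_image]
  simp only [SetLike.mem_coe, Submodule.mem_prod, Prod.forall, and_imp,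
    mem_selfAdjoint_submodule_iff, mem_skewAdjoint_submodule_iff]
  rw [forall_trace_diffPhi_mul_transpose_eq_zero_iff hS hA hQ hZ, and_imp]

end Matrix

theorem stmt_19 (n : ℕ) (Lam : Fin n → ℝ)
    (S Q : Matrix (Fin n) (Fin n) ℝ) (hS : S.IsSymm) (hQ : Qᵀ * Q = 1) :
    let A := Q * Matrix.diagonal Lam * Qᵀ
    -- surjectivity of DΦ(S,Q) onto the symmetric matrices
    let Surj : Prop := ∀ ΔZ : Matrix (Fin n) (Fin n) ℝ, ΔZ.IsSymm →
      ∃ ΔS Ω : Matrix (Fin n) (Fin n) ℝ, ΔS.IsSymm ∧ Ωᵀ = -Ω ∧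
        (2 : ℝ) • S.hadamard ΔS
          + (A * ((Q * Ω) * Qᵀ) - ((Q * Ω) * Qᵀ) * A) = ΔZ
    (Surj ↔ ∀ ΔZ : Matrix (Fin n) (Fin n) ℝ, ΔZ.IsSymm →
        S.hadamard ΔZ = 0 → A * ΔZ - ΔZ * A = 0 → ΔZ = 0) ∧
    ((∀ i j, S i j ≠ 0) → Surj) := by
  intro A Surj
  have hA : A.IsSymm := (isSymm_diagonal Lam).mul_mul_transpose_s19 Q
  have hcrit : Surj ↔ _ := forall_isSymm_exists_diffPhi_eq_iff hS hA (mul_eq_one_comm.mp hQ)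
  exact ⟨hcrit, fun hS0 => hcrit.2 fun Z _ hSZ _ => eq_zero_of_hadamard_eq_zero hS0 hSZ⟩
end
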